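/- Let n ≥ 2, let U ⊆ ℂⁿ be open, and let r : U → ℝ be a smooth (C^∞) real-valued function such that r_n(z) := ∂r/∂z_n ≠ 0 for all z ∈ U (hence also r_{n̄} = conj(r_n) ≠ 0, since r is real-valued). Write r_k = ∂r/∂z_k, r_{k̄} = ∂r/∂z̄_k, and r_{k l̄} = ∂²r/∂z_k∂z̄_l. For 1 ≤ i ≤ n−1 define the first-order differential operators acting on twice continuously differentiable functions f : U → ℂ by 𝔏_i f = ∂f/∂z_i − (r_i/r_n)·∂f/∂z_n and 𝔏̄_j f = ∂f/∂z̄_j − (r_{j̄}/r_{n̄})·∂f/∂z̄_n. Then for all 1 ≤ i, j ≤ n−1 and every C² function f : U → ℂ, the commutator satisfies 𝔏_i(𝔏̄_j f) − 𝔏̄_j(𝔏_i f) = 𝔠_{ij} · ( (1/r_n)·∂f/∂z_n − (1/r_{n̄})·∂f/∂z̄_n ), where 𝔠_{ij} = r_{i j̄} − (r_i r_{n j̄})/r_n − (r_{j̄} r_{i n̄})/r_{n̄} + (r_{j̄} r_{n n̄} r_i)/(r_{n̄} r_n). -/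

import Mathlib

open scoped ContDiff

/-- The Wirtinger derivative `∂f/∂z_k = ½(∂f/∂x_k - i ∂f/∂y_k)` of a function
`f : ℂⁿ → ℂ`, computed from the real Fréchet derivative. -/
noncomputable def wdz {n : ℕ} (k : Fin n) (f : (Fin n → ℂ) → ℂ) (z : Fin n → ℂ) : ℂ :=
  (1 / 2 : ℂ) *
    (fderiv ℝ f z (Pi.single k 1) - Complex.I * fderiv ℝ f z (Pi.single k Complex.I))

/-- The conjugate Wirtinger derivative `∂f/∂z̄_k = ½(∂f/∂x_k + i ∂f/∂y_k)`. -/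
noncomputable def wdzbar {n : ℕ} (k : Fin n) (f : (Fin n → ℂ) → ℂ) (z : Fin n → ℂ) : ℂ :=
  (1 / 2 : ℂ) *
    (fderiv ℝ f z (Pi.single k 1) + Complex.I * fderiv ℝ f z (Pi.single k Complex.I))

/-- The tangential (1,0) vector field `𝔏_i f = ∂f/∂z_i - (r_i / r_N) ∂f/∂z_N` attached to a
real defining function `r`, where `N` plays the role of the distinguished last coordinate. -/
noncomputable def Lop {n : ℕ} (r : (Fin n → ℂ) → ℝ) (i N : Fin n)
    (f : (Fin n → ℂ) → ℂ) (z : Fin n → ℂ) : ℂ :=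
  wdz i f z -
    (wdz i (fun w => (r w : ℂ)) z / wdz N (fun w => (r w : ℂ)) z) * wdz N f z

/-- The tangential (0,1) vector field `𝔏̄_j f = ∂f/∂z̄_j - (r_{j̄} / r_{N̄}) ∂f/∂z̄_N`. -/
noncomputable def Lbarop {n : ℕ} (r : (Fin n → ℂ) → ℝ) (j N : Fin n)
    (f : (Fin n → ℂ) → ℂ) (z : Fin n → ℂ) : ℂ :=
  wdzbar j f z -
    (wdzbar j (fun w => (r w : ℂ)) z / wdzbar N (fun w => (r w : ℂ)) z) * wdzbar N f z

section WirtingerHelpers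

variable {n : ℕ} {g h : (Fin n → ℂ) → ℂ} {z : Fin n → ℂ}

theorem fda_sub (hg : DifferentiableAt ℝ g z) (hh : DifferentiableAt ℝ h z) (v : Fin n → ℂ) :
    fderiv ℝ (fun w => g w - h w) z v = fderiv ℝ g z v - fderiv ℝ h z v := by
  rw [fderiv_fun_sub hg hh]; rfl

theorem fda_mul (hg : DifferentiableAt ℝ g z) (hh : DifferentiableAt ℝ h z) (v : Fin n → ℂ) :
    fderiv ℝ (fun w => g w * h w) z v = fderiv ℝ g z v * h z + g z * fderiv ℝ h z v := by
  rw [fderiv_fun_mul hg hh]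
  simp only [ContinuousLinearMap.add_apply, ContinuousLinearMap.smul_apply,
    ContinuousLinearMap.smulRight_apply, smul_eq_mul]
  ring

theorem fda_inv (hh : DifferentiableAt ℝ h z) (h0 : h z ≠ 0) (v : Fin n → ℂ) :
    fderiv ℝ (fun w => (h w)⁻¹) z v = -((h z)⁻¹ * (h z)⁻¹) * fderiv ℝ h z v := by
  have H : HasFDerivAt (fun w => (h w)⁻¹)
      ((-ContinuousLinearMap.mulLeftRight ℝ ℂ (h z)⁻¹ (h z)⁻¹).comp (fderiv ℝ h z)) z :=
    (hasFDerivAt_inv' (𝕜 := ℝ) h0).comp z hh.hasFDerivAt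
  rw [H.fderiv]
  simp only [ContinuousLinearMap.comp_apply, ContinuousLinearMap.neg_apply,
    ContinuousLinearMap.mulLeftRight_apply]
  ring

theorem wdz_sub (k : Fin n) (hg : DifferentiableAt ℝ g z) (hh : DifferentiableAt ℝ h z) :
    wdz k (fun w => g w - h w) z = wdz k g z - wdz k h z := by
  simp only [wdz, fda_sub hg hh]; ring

theorem wdz_mul (k : Fin n) (hg : DifferentiableAt ℝ g z) (hh : DifferentiableAt ℝ h z) :
    wdz k (fun w => g w * h w) z = wdz k g z * h z + g z * wdz k h z := by
  simp only [wdz, fda_mul hg hh]; ring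

theorem wdz_div (k : Fin n) (hg : DifferentiableAt ℝ g z) (hh : DifferentiableAt ℝ h z)
    (h0 : h z ≠ 0) :
    wdz k (fun w => g w / h w) z = (wdz k g z * h z - g z * wdz k h z) / h z ^ 2 := by
  have e : ∀ w, g w / h w = g w * (h w)⁻¹ := fun w => div_eq_mul_inv _ _
  simp only [e]
  rw [wdz_mul k hg (hh.fun_inv h0)]
  have hi : wdz k (fun w => (h w)⁻¹) z = -((h z)⁻¹ * (h z)⁻¹) * wdz k h z := by
    simp only [wdz, fda_inv hh h0]; ring
  rw [hi]; field_simp; ring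

theorem wdzbar_sub (k : Fin n) (hg : DifferentiableAt ℝ g z) (hh : DifferentiableAt ℝ h z) :
    wdzbar k (fun w => g w - h w) z = wdzbar k g z - wdzbar k h z := by
  simp only [wdzbar, fda_sub hg hh]; ring

theorem wdzbar_mul (k : Fin n) (hg : DifferentiableAt ℝ g z) (hh : DifferentiableAt ℝ h z) :
    wdzbar k (fun w => g w * h w) z = wdzbar k g z * h z + g z * wdzbar k h z := by
  simp only [wdzbar, fda_mul hg hh]; ring

theorem wdzbar_div (k : Fin n) (hg : DifferentiableAt ℝ g z) (hh : DifferentiableAt ℝ h z)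
    (h0 : h z ≠ 0) :
    wdzbar k (fun w => g w / h w) z = (wdzbar k g z * h z - g z * wdzbar k h z) / h z ^ 2 := by
  have e : ∀ w, g w / h w = g w * (h w)⁻¹ := fun w => div_eq_mul_inv _ _
  simp only [e]
  rw [wdzbar_mul k hg (hh.fun_inv h0)]
  have hi : wdzbar k (fun w => (h w)⁻¹) z = -((h z)⁻¹ * (h z)⁻¹) * wdzbar k h z := by
    simp only [wdzbar, fda_inv hh h0]; ring
  rw [hi]; field_simp; ring

theorem diff_div (hg : DifferentiableAt ℝ g z) (hh : DifferentiableAt ℝ h z) (h0 : h z ≠ 0) :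
    DifferentiableAt ℝ (fun w => g w / h w) z := by
  simp only [div_eq_mul_inv]
  exact hg.mul (hh.inv h0)

theorem diff_fda (hg : ContDiffAt ℝ 2 g z) (v : Fin n → ℂ) :
    DifferentiableAt ℝ (fun w => fderiv ℝ g w v) z := by
  have h1 : ContDiffAt ℝ 1 (fderiv ℝ g) z := hg.fderiv_right (by norm_num)
  exact (h1.differentiableAt one_ne_zero).clm_apply (differentiableAt_const v)

theorem diff_wdz (hg : ContDiffAt ℝ 2 g z) (k : Fin n) :
    DifferentiableAt ℝ (fun w => wdz k g w) z := by
  simp only [wdz]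
  exact ((diff_fda hg _).sub ((diff_fda hg _).const_mul _)).const_mul _

theorem diff_wdzbar (hg : ContDiffAt ℝ 2 g z) (k : Fin n) :
    DifferentiableAt ℝ (fun w => wdzbar k g w) z := by
  simp only [wdzbar]
  exact ((diff_fda hg _).add ((diff_fda hg _).const_mul _)).const_mul _

theorem fderiv_fda (hg : ContDiffAt ℝ 2 g z) (u v : Fin n → ℂ) :
    fderiv ℝ (fun w => fderiv ℝ g w v) z u = fderiv ℝ (fderiv ℝ g) z u v := by
  have hD : DifferentiableAt ℝ (fderiv ℝ g) z :=
    (hg.fderiv_right (m := 1) (by norm_num)).differentiableAt one_ne_zero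
  have H : HasFDerivAt (fun w => fderiv ℝ g w v)
      ((ContinuousLinearMap.apply ℝ ℂ v).comp (fderiv ℝ (fderiv ℝ g) z)) z :=
    ((ContinuousLinearMap.apply ℝ ℂ v).hasFDerivAt).comp z hD.hasFDerivAt
  rw [H.fderiv]; rfl

theorem wdz_wdzbar_swap (hg : ContDiffAt ℝ 2 g z) (k l : Fin n) :
    wdzbar l (fun w => wdz k g w) z = wdz k (fun w => wdzbar l g w) z := by
  have hsym := hg.isSymmSndFDerivAt (by simp)
  have hd : ∀ v, DifferentiableAt ℝ (fun w => fderiv ℝ g w v) z := fun v => diff_fda hg v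
  have e1 : ∀ u : Fin n → ℂ, fderiv ℝ (fun w => wdz k g w) z u
      = (1/2 : ℂ) * (fderiv ℝ (fderiv ℝ g) z u (Pi.single k 1)
          - Complex.I * fderiv ℝ (fderiv ℝ g) z u (Pi.single k Complex.I)) := by
    intro u
    have hfun : (fun w => wdz k g w) = fun w => (1/2 : ℂ) *
        (fderiv ℝ g w (Pi.single k 1) - Complex.I * fderiv ℝ g w (Pi.single k Complex.I)) := rfl
    rw [hfun, fderiv_const_mul ((hd _).fun_sub ((hd _).const_mul _)) ((1:ℂ)/2),
      ContinuousLinearMap.smul_apply,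
      fderiv_fun_sub (hd _) ((hd _).const_mul _), ContinuousLinearMap.sub_apply,
      fderiv_const_mul (hd _) Complex.I, ContinuousLinearMap.smul_apply,
      fderiv_fda hg, fderiv_fda hg]
    simp [smul_eq_mul]
  have e2 : ∀ u : Fin n → ℂ, fderiv ℝ (fun w => wdzbar l g w) z u
      = (1/2 : ℂ) * (fderiv ℝ (fderiv ℝ g) z u (Pi.single l 1)
          + Complex.I * fderiv ℝ (fderiv ℝ g) z u (Pi.single l Complex.I)) := by
    intro u
    have hfun : (fun w => wdzbar l g w) = fun w => (1/2 : ℂ) *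
        (fderiv ℝ g w (Pi.single l 1) + Complex.I * fderiv ℝ g w (Pi.single l Complex.I)) := rfl
    rw [hfun, fderiv_const_mul ((hd _).fun_add ((hd _).const_mul _)) ((1:ℂ)/2),
      ContinuousLinearMap.smul_apply,
      fderiv_fun_add (hd _) ((hd _).const_mul _), ContinuousLinearMap.add_apply,
      fderiv_const_mul (hd _) Complex.I, ContinuousLinearMap.smul_apply,
      fderiv_fda hg, fderiv_fda hg]
    simp [smul_eq_mul]
  rw [wdzbar, wdz, e1, e1, e2, e2,
    hsym (Pi.single l 1) (Pi.single k 1), hsym (Pi.single l 1) (Pi.single k Complex.I),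
    hsym (Pi.single l Complex.I) (Pi.single k 1),
    hsym (Pi.single l Complex.I) (Pi.single k Complex.I)]
  ring

theorem wdzbar_real_conj {r : (Fin n → ℂ) → ℝ} (hr : DifferentiableAt ℝ r z) (k : Fin n) :
    wdzbar k (fun w => (r w : ℂ)) z = (starRingEnd ℂ) (wdz k (fun w => (r w : ℂ)) z) := by
  have H : ∀ v : Fin n → ℂ, fderiv ℝ (fun w => (r w : ℂ)) z v = ((fderiv ℝ r z v : ℝ) : ℂ) := by
    intro v
    have : HasFDerivAt (fun w => (r w : ℂ)) (Complex.ofRealCLM.comp (fderiv ℝ r z)) z :=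
      Complex.ofRealCLM.hasFDerivAt.comp z hr.hasFDerivAt
    rw [this.fderiv]; rfl
  rw [wdz, wdzbar, H, H]
  simp only [map_mul, map_sub, map_div₀, map_one, map_ofNat, Complex.conj_ofReal, Complex.conj_I]
  ring

end WirtingerHelpers

/-- The displayed bracket computation in the proof of Lemma 3.2 of the paper: on an open set
`U ⊆ ℂⁿ` (`n ≥ 2`) where the smooth real-valued function `r` satisfies `r_n ≠ 0`, the
commutator of the tangential vector fields `𝔏_i` and `𝔏̄_j` (for `1 ≤ i, j ≤ n-1`) applied
to any `C²` function `f` equals `𝔠_{ij} ((1/r_n) ∂f/∂z_n - (1/r_{n̄}) ∂f/∂z̄_n)`, where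
`𝔠_{ij} = r_{i j̄} - r_i r_{n j̄}/r_n - r_{j̄} r_{i n̄}/r_{n̄} + r_{j̄} r_{n n̄} r_i/(r_{n̄} r_n)`. -/
theorem tangential_bracket_identity
    {n : ℕ} (hn : 2 ≤ n) (U : Set (Fin n → ℂ)) (hU : IsOpen U)
    (r : (Fin n → ℂ) → ℝ) (hr : ContDiffOn ℝ ∞ r U)
    (N : Fin n) (hN : (N : ℕ) = n - 1)
    (hrn : ∀ z ∈ U, wdz N (fun w => (r w : ℂ)) z ≠ 0)
    (i j : Fin n) (hi : (i : ℕ) < n - 1) (hj : (j : ℕ) < n - 1)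
    (f : (Fin n → ℂ) → ℂ) (hf : ContDiffOn ℝ 2 f U)
    (z : Fin n → ℂ) (hz : z ∈ U) :
    Lop r i N (fun w => Lbarop r j N f w) z - Lbarop r j N (fun w => Lop r i N f w) z =
      (wdz i (fun w => wdzbar j (fun v => (r v : ℂ)) w) z
        - wdz i (fun v => (r v : ℂ)) z *
            wdz N (fun w => wdzbar j (fun v => (r v : ℂ)) w) z /
            wdz N (fun v => (r v : ℂ)) z
        - wdzbar j (fun v => (r v : ℂ)) z *
            wdz i (fun w => wdzbar N (fun v => (r v : ℂ)) w) z /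
            wdzbar N (fun v => (r v : ℂ)) z
        + wdzbar j (fun v => (r v : ℂ)) z *
            wdz N (fun w => wdzbar N (fun v => (r v : ℂ)) w) z *
            wdz i (fun v => (r v : ℂ)) z /
            (wdzbar N (fun v => (r v : ℂ)) z * wdz N (fun v => (r v : ℂ)) z)) *
      ((1 / wdz N (fun v => (r v : ℂ)) z) * wdz N f z -
        (1 / wdzbar N (fun v => (r v : ℂ)) z) * wdzbar N f z) := by
  have hmem : U ∈ nhds z := hU.mem_nhds hz
  have hrAt : ContDiffAt ℝ 2 r z := (hr.contDiffAt hmem).of_le (by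
    rw [show (2 : WithTop ℕ∞) = ((2 : ℕ∞) : WithTop ℕ∞) by rfl]
    exact WithTop.coe_le_coe.mpr le_top)
  have hρ : ContDiffAt ℝ 2 (fun w => ((r w : ℝ) : ℂ)) z :=
    Complex.ofRealCLM.contDiff.contDiffAt.comp z hrAt
  have hfAt : ContDiffAt ℝ 2 f z := hf.contDiffAt hmem
  -- differentiability of first-order Wirtinger derivatives
  have dwbρ : ∀ l : Fin n, DifferentiableAt ℝ (fun w => wdzbar l (fun v => (r v : ℂ)) w) z :=
    fun l => diff_wdzbar hρ l
  have dwzρ : ∀ l : Fin n, DifferentiableAt ℝ (fun w => wdz l (fun v => (r v : ℂ)) w) z :=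
    fun l => diff_wdz hρ l
  have dwbf : ∀ l : Fin n, DifferentiableAt ℝ (fun w => wdzbar l f w) z :=
    fun l => diff_wdzbar hfAt l
  have dwzf : ∀ l : Fin n, DifferentiableAt ℝ (fun w => wdz l f w) z :=
    fun l => diff_wdz hfAt l
  -- nonvanishing denominators
  have hq : wdz N (fun v => (r v : ℂ)) z ≠ 0 := hrn z hz
  have hqb : wdzbar N (fun v => (r v : ℂ)) z ≠ 0 := by
    rw [wdzbar_real_conj (hrAt.differentiableAt two_ne_zero) N]
    simpa using hq
  simp only [Lop, Lbarop]
  rw [wdz_sub i (dwbf j) ((diff_div (dwbρ j) (dwbρ N) hqb).fun_mul (dwbf N)),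
      wdz_sub N (dwbf j) ((diff_div (dwbρ j) (dwbρ N) hqb).fun_mul (dwbf N)),
      wdz_mul i (diff_div (dwbρ j) (dwbρ N) hqb) (dwbf N),
      wdz_mul N (diff_div (dwbρ j) (dwbρ N) hqb) (dwbf N),
      wdz_div i (dwbρ j) (dwbρ N) hqb,
      wdz_div N (dwbρ j) (dwbρ N) hqb,
      wdzbar_sub j (dwzf i) ((diff_div (dwzρ i) (dwzρ N) hq).fun_mul (dwzf N)),
      wdzbar_sub N (dwzf i) ((diff_div (dwzρ i) (dwzρ N) hq).fun_mul (dwzf N)),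
      wdzbar_mul j (diff_div (dwzρ i) (dwzρ N) hq) (dwzf N),
      wdzbar_mul N (diff_div (dwzρ i) (dwzρ N) hq) (dwzf N),
      wdzbar_div j (dwzρ i) (dwzρ N) hq,
      wdzbar_div N (dwzρ i) (dwzρ N) hq,
      wdz_wdzbar_swap hρ i j, wdz_wdzbar_swap hρ i N,
      wdz_wdzbar_swap hρ N j, wdz_wdzbar_swap hρ N N,
      wdz_wdzbar_swap hfAt i j, wdz_wdzbar_swap hfAt i N,
      wdz_wdzbar_swap hfAt N j, wdz_wdzbar_swap hfAt N N]
  set A := wdz i (fun v => (r v : ℂ)) z with hA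
  set Q := wdz N (fun v => (r v : ℂ)) z with hQ
  set Bj := wdzbar j (fun v => (r v : ℂ)) z with hBj
  set Qb := wdzbar N (fun v => (r v : ℂ)) z with hQb
  set Fa := wdz N f z with hFa
  set Fb := wdzbar N f z with hFb
  set Mij := wdz i (fun w => wdzbar j (fun v => (r v : ℂ)) w) z with hMij
  set MiN := wdz i (fun w => wdzbar N (fun v => (r v : ℂ)) w) z with hMiN
  set MNj := wdz N (fun w => wdzbar j (fun v => (r v : ℂ)) w) z with hMNj
  set MNN := wdz N (fun w => wdzbar N (fun v => (r v : ℂ)) w) z with hMNN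
  set Gij := wdz i (fun w => wdzbar j f w) z with hGij
  set GiN := wdz i (fun w => wdzbar N f w) z with hGiN
  set GNj := wdz N (fun w => wdzbar j f w) z with hGNj
  set GNN := wdz N (fun w => wdzbar N f w) z with hGNN
  have hu : Q * Q⁻¹ = 1 := mul_inv_cancel₀ hq
  have hv : Qb * Qb⁻¹ = 1 := mul_inv_cancel₀ hqb
  simp only [div_eq_mul_inv, mul_inv, ← inv_pow]
  linear_combination (Fa * Mij * Q⁻¹ - Bj * Fa * MiN * Q⁻¹ * Qb⁻¹) * hu +
    (-(Fb * Mij * Qb⁻¹) + A * Fb * MNj * Q⁻¹ * Qb⁻¹) * hv
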